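/- arXiv:2005.12575 — 7 statements merged into one kernel-verified Lean document; each statement's English description precedes it below -/
import Mathlib

section
/- Let R be a commutative ring. The ring U_2(R) of 2×2 upper triangular matrices over R is a CN ring if and only if for any a, b in R there exists c in R such that both a - c and b - c are nilpotent in R. -/
/-- An element of a ring has a *CN-decomposition* if it is a sum of a central
element and a nilpotent element. -/
def HasCNDecomp {R : Type*} [Ring R] (a : R) : Prop :=
  ∃ c n : R, c ∈ Set.center R ∧ IsNilpotent n ∧ a = c + n

/-- A ring is a *CN ring* if every element has a CN-decomposition. -/
def IsCNRing (R : Type*) [Ring R] : Prop := ∀ a : R, HasCNDecomp a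

/-- `U₂(R)`: the subring of `M₂(R)` consisting of the upper triangular
`2 × 2` matrices. -/
def U2 (R : Type*) [Ring R] : Subring (Matrix (Fin 2) (Fin 2) R) where
  carrier := {A | A 1 0 = 0}
  zero_mem' := by simp [Set.mem_setOf_eq]
  one_mem' := by simp [Set.mem_setOf_eq, Matrix.one_apply]
  add_mem' := by
    intro A B hA hB
    simp only [Set.mem_setOf_eq] at *
    simp [Matrix.add_apply, hA, hB]
  neg_mem' := by
    intro A hA
    simp only [Set.mem_setOf_eq] at *
    simp [Matrix.neg_apply, hA]
  mul_mem' := by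
    intro A B hA hB
    simp only [Set.mem_setOf_eq] at *
    simp [Matrix.mul_apply, Fin.sum_univ_two, hA, hB]

/-!
An upper triangular matrix is nilpotent exactly when its two diagonal entries are, since a
strictly upper triangular `2 × 2` matrix squares to zero. A central element of `U₂(R)` commutes
with the matrix unit `E₀₁` and so has equal diagonal entries, while scalar matrices are central.
Hence `A` has a CN-decomposition iff some `c` makes `A₀₀ - c` and `A₁₁ - c` nilpotent, and applying
this to `diag(a, b)` gives the theorem.
-/

namespace U2

section Ring

variable {R : Type*} [Ring R]

def topLeft : U2 R →+* R where
  toFun A := (A : Matrix (Fin 2) (Fin 2) R) 0 0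
  map_one' := by simp
  map_mul' A B := by
    have hB : (B : Matrix (Fin 2) (Fin 2) R) 1 0 = 0 := B.2
    simp [Matrix.mul_apply, hB]
  map_zero' := rfl
  map_add' _ _ := rfl

theorem topLeft_apply (A : U2 R) : topLeft A = (A : Matrix (Fin 2) (Fin 2) R) 0 0 := rfl

def bottomRight : U2 R →+* R where
  toFun A := (A : Matrix (Fin 2) (Fin 2) R) 1 1
  map_one' := by simp
  map_mul' A B := by
    have hA : (A : Matrix (Fin 2) (Fin 2) R) 1 0 = 0 := A.2
    simp [Matrix.mul_apply, hA]
  map_zero' := rfl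
  map_add' _ _ := rfl

theorem bottomRight_apply (A : U2 R) : bottomRight A = (A : Matrix (Fin 2) (Fin 2) R) 1 1 := rfl

def scalar : R →+* U2 R :=
  (Matrix.scalar (Fin 2)).codRestrict (U2 R) fun c => show Matrix.scalar (Fin 2) c 1 0 = 0 by simp

@[simp]
theorem topLeft_scalar (c : R) : topLeft (scalar c) = c := by
  show Matrix.scalar (Fin 2) c 0 0 = c
  simp

@[simp]
theorem bottomRight_scalar (c : R) : bottomRight (scalar c) = c := by
  show Matrix.scalar (Fin 2) c 1 1 = c
  simp

def diagonal (a b : R) : U2 R :=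
  ⟨Matrix.diagonal ![a, b], show Matrix.diagonal ![a, b] 1 0 = 0 by simp⟩

@[simp]
theorem topLeft_diagonal (a b : R) : topLeft (diagonal a b) = a := by
  show Matrix.diagonal ![a, b] 0 0 = a
  simp

@[simp]
theorem bottomRight_diagonal (a b : R) : bottomRight (diagonal a b) = b := by
  show Matrix.diagonal ![a, b] 1 1 = b
  simp

theorem scalar_mem_center {c : R} (hc : c ∈ Set.center R) : scalar c ∈ Set.center (U2 R) :=
  Semigroup.mem_center_iff.mpr fun B => Subtype.ext <|
    show (B : Matrix (Fin 2) (Fin 2) R) * Matrix.scalar (Fin 2) c = Matrix.scalar (Fin 2) c * B from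
      (Matrix.scalar_commute c (fun r => (Semigroup.mem_center_iff.mp hc r).symm) _).eq.symm

theorem topLeft_eq_bottomRight_of_mem_center {C : U2 R} (hC : C ∈ Set.center (U2 R)) :
    topLeft C = bottomRight C := by
  let E : U2 R := ⟨!![0, 1; 0, 0], show !![(0 : R), 1; 0, 0] 1 0 = 0 by simp⟩
  have hC10 : (C : Matrix (Fin 2) (Fin 2) R) 1 0 = 0 := C.2
  have hEC := congrArg (fun X : U2 R => (X : Matrix (Fin 2) (Fin 2) R) 0 1)
    (Semigroup.mem_center_iff.mp hC E)
  simpa [topLeft_apply, bottomRight_apply, E, Matrix.mul_apply, hC10] using hEC.symm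

theorem sq_eq_zero_of_topLeft_eq_zero_of_bottomRight_eq_zero {A : U2 R}
    (h₀ : topLeft A = 0) (h₁ : bottomRight A = 0) : A ^ 2 = 0 := by
  have h₀' : (A : Matrix (Fin 2) (Fin 2) R) 0 0 = 0 := h₀
  have h₁' : (A : Matrix (Fin 2) (Fin 2) R) 1 1 = 0 := h₁
  have hA10 : (A : Matrix (Fin 2) (Fin 2) R) 1 0 = 0 := A.2
  apply Subtype.ext
  ext i j
  fin_cases i <;> fin_cases j <;> simp [sq, Matrix.mul_apply, h₀', h₁', hA10]

theorem isNilpotent_iff {A : U2 R} :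
    IsNilpotent A ↔ IsNilpotent (topLeft A) ∧ IsNilpotent (bottomRight A) := by
  refine ⟨fun h => ⟨h.map topLeft, h.map bottomRight⟩, ?_⟩
  rintro ⟨⟨m, hm⟩, ⟨n, hn⟩⟩
  refine ⟨(m + n) * 2, ?_⟩
  rw [pow_mul]
  apply sq_eq_zero_of_topLeft_eq_zero_of_bottomRight_eq_zero
  · rw [map_pow, pow_add, hm, zero_mul]
  · rw [map_pow, pow_add, hn, mul_zero]

end Ring

theorem hasCNDecomp_iff {R : Type*} [CommRing R] {A : U2 R} :
    HasCNDecomp A ↔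
      ∃ c : R, IsNilpotent (topLeft A - c) ∧ IsNilpotent (bottomRight A - c) := by
  constructor
  · rintro ⟨C, N, hC, hN, rfl⟩
    refine ⟨topLeft C, ?_, ?_⟩
    · simpa using hN.map topLeft
    · simpa [topLeft_eq_bottomRight_of_mem_center hC] using hN.map bottomRight
  · rintro ⟨c, h₀, h₁⟩
    refine ⟨scalar c, A - scalar c, scalar_mem_center (Set.center_eq_univ R ▸ Set.mem_univ c),
      isNilpotent_iff.mpr ?_, by abel⟩
    simpa using And.intro h₀ h₁

end U2

/-- For a commutative ring `R`, the upper triangular matrix ring `U₂(R)` is a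
CN ring iff for all `a b : R` there is `c : R` with `a - c` and `b - c`
nilpotent. -/
theorem U2_isCNRing_iff {R : Type*} [CommRing R] :
    IsCNRing (U2 R) ↔
      ∀ a b : R, ∃ c : R, IsNilpotent (a - c) ∧ IsNilpotent (b - c) := by
  refine ⟨fun h a b => ?_, fun h A => U2.hasCNDecomp_iff.mpr (h _ _)⟩
  simpa using U2.hasCNDecomp_iff.mp (h (U2.diagonal a b))
end

section
/- The ring of real quaternions H is a CU ring (every quaternion is a sum of a central element and a unit) but H is not a CN ring (the quaternion i is not a sum of a central quaternion and a nilpotent quaternion). -/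
open Quaternion

/-- An element of a ring has a *CU-decomposition* if it is a sum of a central
element and a unit. -/
def HasCUDecomp {R : Type*} [Ring R] (a : R) : Prop :=
  ∃ c u : R, c ∈ Set.center R ∧ IsUnit u ∧ a = c + u

/-- A ring is a *CU ring* if every element has a CU-decomposition. -/
def IsCURing (R : Type*) [Ring R] : Prop := ∀ a : R, HasCUDecomp a

/-!
Every nonzero quaternion is a unit and `0 = -1 + 1`, so `ℍ` is CU. Since `ℍ` has no nonzero
nilpotents, an element has a CN-decomposition only if it is central, and `i` is not: `ij = k`
while `ji = -k`.
-/

theorem hasCNDecomp_iff_mem_center {R : Type*} [Ring R] [IsReduced R] {a : R} :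
    HasCNDecomp a ↔ a ∈ Set.center R := by
  constructor
  · rintro ⟨c, n, hc, hn, rfl⟩
    rwa [hn.eq_zero, add_zero]
  · exact fun ha => ⟨a, 0, ha, IsNilpotent.zero, (add_zero a).symm⟩

theorem isCURing_of_divisionRing (K : Type*) [DivisionRing K] : IsCURing K := by
  intro a
  rcases eq_or_ne a 0 with rfl | ha
  · exact ⟨-1, 1, Set.neg_mem_center Set.one_mem_center, isUnit_one, (neg_add_cancel 1).symm⟩
  · exact ⟨0, a, Set.zero_mem_center, isUnit_iff_ne_zero.mpr ha, (zero_add a).symm⟩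

theorem QuaternionAlgebra.mk_zero_one_zero_zero_notMem_center {R : Type*} [CommRing R]
    [NeZero (2 : R)] (c₁ c₂ c₃ : R) :
    (⟨0, 1, 0, 0⟩ : ℍ[R, c₁, c₂, c₃]) ∉ Set.center ℍ[R, c₁, c₂, c₃] := by
  intro hi
  have hk : (1 : R) = -1 := by
    simpa using congrArg QuaternionAlgebra.imK (hi.comm (⟨0, 0, 1, 0⟩ : ℍ[R, c₁, c₂, c₃])).eq
  exact two_ne_zero (by linear_combination hk : (2 : R) = 0)

/-- The real quaternions form a CU ring, but not a CN ring: the quaternion `i`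
has no CN-decomposition. -/
theorem quaternions_CU_not_CN :
    IsCURing ℍ[ℝ] ∧ ¬ HasCNDecomp (⟨0, 1, 0, 0⟩ : ℍ[ℝ]) ∧ ¬ IsCNRing ℍ[ℝ] := by
  -- `⟨0, 1, 0, 0⟩` elaborates in `ℍ[ℝ,-1,0,-1]`, where no `IsReduced` instance is found.
  have hi : ¬ HasCNDecomp (⟨0, 1, 0, 0⟩ : ℍ[ℝ]) := fun h =>
    QuaternionAlgebra.mk_zero_one_zero_zero_notMem_center _ _ _
      (hasCNDecomp_iff_mem_center (R := ℍ[ℝ]) |>.mp h)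
  exact ⟨isCURing_of_divisionRing ℍ[ℝ], hi, fun h => hi (h _)⟩
end

section
/- Let R be a ring and n ≥ 1 an integer. R is a CN ring if and only if D_n(R) is a CN ring, where D_n(R) is the subring of M_n(R) consisting of all upper triangular n×n matrices whose diagonal entries are all equal; here the CN-decomposition in D_n(R) is taken with respect to the center of D_n(R) and nilpotent elements of D_n(R). -/
/-- `Dₙ(R)`: the subring of `Mₙ(R)` of upper triangular matrices all of whose
diagonal entries are equal. -/
def Dn (R : Type*) [Ring R] (n : ℕ) : Subring (Matrix (Fin n) (Fin n) R) where
  carrier := {A | (∀ i j : Fin n, j < i → A i j = 0) ∧ ∀ i j, A i i = A j j}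
  zero_mem' := ⟨fun _ _ _ => rfl, fun _ _ => rfl⟩
  one_mem' := ⟨fun i j h => Matrix.one_apply_ne (Ne.symm (ne_of_lt h)), by
    simp [Matrix.one_apply]⟩
  add_mem' := by
    rintro A B ⟨hA1, hA2⟩ ⟨hB1, hB2⟩
    exact ⟨fun i j h => by simp [Matrix.add_apply, hA1 i j h, hB1 i j h],
      fun i j => by simp [Matrix.add_apply, hA2 i j, hB2 i j]⟩
  neg_mem' := by
    rintro A ⟨hA1, hA2⟩
    exact ⟨fun i j h => by simp [Matrix.neg_apply, hA1 i j h],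
      fun i j => by simp [Matrix.neg_apply, hA2 i j]⟩
  mul_mem' := by
    rintro A B ⟨hA1, hA2⟩ ⟨hB1, hB2⟩
    constructor
    · intro i j h
      rw [Matrix.mul_apply]
      apply Finset.sum_eq_zero
      intro m _
      rcases lt_or_ge m i with hm | hm
      · rw [hA1 i m hm, zero_mul]
      · rw [hB1 m j (lt_of_lt_of_le h hm), mul_zero]
    · intro i j
      have key : ∀ k : Fin n, (A * B) k k = A k k * B k k := by
        intro k
        rw [Matrix.mul_apply]
        apply Finset.sum_eq_single
        · intro m _ hm
          rcases hm.lt_or_gt with h | h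
          · rw [hA1 k m h, zero_mul]
          · rw [hB1 m k h, mul_zero]
        · intro hk
          exact absurd (Finset.mem_univ k) hk
      rw [key i, key j, hA2 i j, hB2 i j]

open Matrix

theorem map_mem_center_of_surjective {M N F : Type*} [Semigroup M] [Semigroup N]
    [FunLike F M N] [MulHomClass F M N] {f : F} (hf : Function.Surjective f) {z : M}
    (hz : z ∈ Set.center M) : f z ∈ Set.center N := by
  refine Semigroup.mem_center_iff.mpr fun g => ?_
  obtain ⟨g, rfl⟩ := hf g
  rw [← map_mul, ← map_mul, Semigroup.mem_center_iff.mp hz g]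

section CNRing

variable {R S : Type*} [Ring R] [Ring S]

theorem IsCNRing.of_surjective (f : S →+* R) (hf : Function.Surjective f) (hS : IsCNRing S) :
    IsCNRing R := by
  intro a
  obtain ⟨b, rfl⟩ := hf a
  obtain ⟨c, m, hc, hm, rfl⟩ := hS b
  exact ⟨f c, f m, map_mem_center_of_surjective hf hc, hm.map f, map_add f c m⟩

theorem IsCNRing.of_ker_nil (f : S →+* R) (hker : ∀ x, f x = 0 → IsNilpotent x)
    (hlift : ∀ c ∈ Set.center R, ∃ c' ∈ Set.center S, f c' = c) (hR : IsCNRing R) :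
    IsCNRing S := by
  intro a
  obtain ⟨c, m, hc, ⟨k, hk⟩, ha⟩ := hR (f a)
  obtain ⟨c', hc', rfl⟩ := hlift c hc
  refine ⟨c', a - c', hc', ?_, (add_sub_cancel c' a).symm⟩
  have hpow : f ((a - c') ^ k) = 0 := by rw [map_pow, map_sub, ha, add_sub_cancel_left, hk]
  exact (hker _ hpow).of_pow

end CNRing

namespace Matrix

theorem IsUpperTriangular.diag_mul {R m : Type*} [NonUnitalNonAssocSemiring R] [Fintype m]
    [LinearOrder m] {M N : Matrix m m R} (hM : M.IsUpperTriangular) (hN : N.IsUpperTriangular) :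
    (M * N).diag = M.diag * N.diag := by
  ext i
  change ∑ k, M i k * N k i = M i i * N i i
  refine Finset.sum_eq_single i (fun k _ hki => ?_) (fun hi => absurd (Finset.mem_univ i) hi)
  rcases hki.lt_or_gt with h | h
  · rw [hM h, zero_mul]
  · rw [hN h, mul_zero]

theorem IsUpperTriangular.pow_eq_zero_of_diag_eq_zero {R : Type*} [Semiring R] {n : ℕ}
    {A : Matrix (Fin n) (Fin n) R} (hA : A.IsUpperTriangular) (hd : A.diag = 0) : A ^ n = 0 := by
  have hstrict : ∀ i j : Fin n, j ≤ i → A i j = 0 := fun i j hji => by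
    rcases hji.lt_or_eq with h | rfl
    · exact hA h
    · exact congrFun hd j
  -- Each factor of `A` pushes the nonzero entries one more step above the diagonal.
  have hpow : ∀ k : ℕ, ∀ i j : Fin n, (j : ℕ) < i + k → (A ^ k) i j = 0 := by
    intro k
    induction k with
    | zero => exact fun i j h => one_apply_ne (Fin.ne_of_gt h)
    | succ k ih =>
      intro i j h
      rw [pow_succ, mul_apply]
      refine Finset.sum_eq_zero fun l _ => ?_
      by_cases hl : (l : ℕ) < i + k
      · rw [ih i l hl, zero_mul]
      · rw [hstrict l j (Fin.le_def.mpr (by omega)), mul_zero]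
  ext i j
  exact hpow n i j (by omega)

end Matrix

namespace Dn

variable {R : Type*} [Ring R] {n : ℕ}

theorem mem_iff {A : Matrix (Fin n) (Fin n) R} :
    A ∈ Dn R n ↔ A.IsUpperTriangular ∧ ∀ i j, A i i = A j j :=
  Iff.rfl

theorem scalar_mem (c : R) : Matrix.scalar (Fin n) c ∈ Dn R n :=
  mem_iff.mpr ⟨blockTriangular_diagonal _, fun i j => by simp⟩

variable (R n) in
def scalar : R →+* Dn R n := (Matrix.scalar (Fin n)).codRestrict (Dn R n) scalar_mem

theorem scalar_mem_center {c : R} (hc : c ∈ Set.center R) : scalar R n c ∈ Set.center (Dn R n) :=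
  Semigroup.mem_center_iff.mpr fun A => Subtype.ext <|
    (scalar_commute c (fun r => (Semigroup.mem_center_iff.mp hc r).symm) A.1).eq.symm

def diagEntry (i : Fin n) : Dn R n →+* R where
  toFun A := A.1 i i
  map_one' := one_apply_eq i
  map_mul' A B := congrFun ((mem_iff.mp A.2).1.diag_mul (mem_iff.mp B.2).1) i
  map_zero' := rfl
  map_add' _ _ := rfl

@[simp]
theorem diagEntry_scalar (i : Fin n) (c : R) : diagEntry i (scalar R n c) = c :=
  diagonal_apply_eq _ i

theorem isNilpotent_of_diagEntry_eq_zero {i : Fin n} {A : Dn R n} (hA : diagEntry i A = 0) :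
    IsNilpotent A := by
  obtain ⟨hut, hdiag⟩ := mem_iff.mp A.2
  refine ⟨n, Subtype.ext ?_⟩
  exact hut.pow_eq_zero_of_diag_eq_zero (funext fun j => (hdiag j i).trans hA)

end Dn

/-- For `n ≥ 1`, `R` is a CN ring iff `Dₙ(R)` is a CN ring. -/
theorem isCNRing_iff_Dn {R : Type*} [Ring R] (n : ℕ) (hn : 1 ≤ n) :
    IsCNRing R ↔ IsCNRing (Dn R n) := by
  let ε : Dn R n →+* R := Dn.diagEntry ⟨0, hn⟩
  have hε : ∀ c, ε (Dn.scalar R n c) = c := Dn.diagEntry_scalar _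
  constructor
  · exact IsCNRing.of_ker_nil ε (fun _ => Dn.isNilpotent_of_diagEntry_eq_zero)
      fun c hc => ⟨Dn.scalar R n c, Dn.scalar_mem_center hc, hε c⟩
  · exact IsCNRing.of_surjective ε fun c => ⟨Dn.scalar R n c, hε c⟩
end

section
/- Let R be a ring. Then R is a CN ring if and only if the Dorroh extension D(Z, R) is a CN ring, where D(Z, R) is the ring on the set Z ⊕ R with componentwise addition and multiplication (n, r)(m, s) = (nm, n·s + m·r + rs), whose identity is (1, 0). -/
/-!
In `Unitization S R` the scalar part never obstructs centrality, and for reduced `S` a nilpotent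
element has zero scalar part. Hence `x = c + n` is a CN-decomposition in `Unitization S R` iff
`x.snd = c.snd + n.snd` is one in `R`, while the scalar part of `x` can be absorbed into `c`.
-/

namespace Unitization

variable {S R : Type*} [CommRing S]

theorem mem_center_iff [NonUnitalRing R] [Module S R] [IsScalarTower S R R]
    [SMulCommClass S R R] {x : Unitization S R} :
    x ∈ Set.center (Unitization S R) ↔ x.snd ∈ Set.center R := by
  rw [Semigroup.mem_center_iff, Semigroup.mem_center_iff]
  constructor
  · intro h r
    simpa using congrArg (·.snd) (h (r : Unitization S R))
  · intro h y
    ext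
    · simp only [fst_mul, mul_comm]
    · simp only [snd_mul, h y.snd]
      abel

variable [Ring R] [Module S R] [IsScalarTower S R R] [SMulCommClass S R R]

theorem inr_pow_succ (r : R) (k : ℕ) :
    (r : Unitization S R) ^ (k + 1) = ↑(r ^ (k + 1)) := by
  induction k with
  | zero => simp
  | succ k ih => rw [pow_succ, ih, ← inr_mul, ← pow_succ]

theorem isNilpotent_inr_iff {r : R} : IsNilpotent (r : Unitization S R) ↔ IsNilpotent r := by
  constructor
  · rintro ⟨k, hk⟩
    refine ⟨k + 1, ?_⟩
    simpa [pow_succ, hk] using (congrArg (·.snd) (inr_pow_succ (S := S) r k)).symm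
  · rintro ⟨k, hk⟩
    exact ⟨k + 1, by rw [inr_pow_succ, pow_succ, hk, zero_mul, inr_zero]⟩

theorem isNilpotent_iff [IsReduced S] {x : Unitization S R} :
    IsNilpotent x ↔ x.fst = 0 ∧ IsNilpotent x.snd := by
  constructor
  · intro hx
    have hfst : x.fst = 0 := (hx.map (fstHom S R)).eq_zero
    refine ⟨hfst, ?_⟩
    rw [← isNilpotent_inr_iff (S := S)]
    convert hx
    ext <;> simp [hfst]
  · rintro ⟨hfst, hsnd⟩
    convert isNilpotent_inr_iff.mpr hsnd
    ext <;> simp [hfst]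

theorem hasCNDecomp_iff [IsReduced S] {x : Unitization S R} :
    HasCNDecomp x ↔ HasCNDecomp x.snd := by
  constructor
  · rintro ⟨c, n, hc, hn, rfl⟩
    exact ⟨c.snd, n.snd, mem_center_iff.mp hc, (isNilpotent_iff.mp hn).2, snd_add c n⟩
  · rintro ⟨c, n, hc, hn, hx⟩
    refine ⟨inl x.fst + (c : Unitization S R), n, mem_center_iff.mpr (by simpa using hc),
      isNilpotent_inr_iff.mpr hn, ?_⟩
    ext <;> simp [hx]

end Unitization

/-- The Dorroh extension `D(ℤ, R)` is `Unitization ℤ R`. -/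
theorem isCNRing_iff_dorroh {R : Type*} [Ring R] :
    IsCNRing R ↔ IsCNRing (Unitization ℤ R) :=
  ⟨fun h x => Unitization.hasCNDecomp_iff.mpr (h x.snd),
    fun h r => Unitization.hasCNDecomp_iff.mp (h (r : Unitization ℤ R))⟩
end

section
/- Let R be a ring and s, t central elements of R. An element A = [[a, 0, 0], [c, d, e], [0, 0, f]] of the ring H_{(s,t)}(R) is nilpotent if and only if a, d, and f are nilpotent elements of R. -/
/-- `H_{(s,t)}(R)`: the subring of `M₃(R)` of matrices of the form
`[[a, 0, 0], [c, d, e], [0, 0, f]]` with `a - d = s*c` and `d - f = t*e`,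
for central elements `s, t` of `R`. -/
def Hst {R : Type*} [Ring R] (s t : R) (hs : s ∈ Set.center R) (ht : t ∈ Set.center R) :
    Subring (Matrix (Fin 3) (Fin 3) R) where
  carrier := {A | A 0 1 = 0 ∧ A 0 2 = 0 ∧ A 2 0 = 0 ∧ A 2 1 = 0 ∧
    A 0 0 - A 1 1 = s * A 1 0 ∧ A 1 1 - A 2 2 = t * A 1 2}
  zero_mem' := ⟨rfl, rfl, rfl, rfl, by simp, by simp⟩
  one_mem' := by
    refine ⟨?_, ?_, ?_, ?_, ?_, ?_⟩ <;> simp [Matrix.one_apply]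
  add_mem' := by
    rintro A B ⟨hA1, hA2, hA3, hA4, hA5, hA6⟩ ⟨hB1, hB2, hB3, hB4, hB5, hB6⟩
    refine ⟨?_, ?_, ?_, ?_, ?_, ?_⟩ <;> simp only [Matrix.add_apply]
    · rw [hA1, hB1, add_zero]
    · rw [hA2, hB2, add_zero]
    · rw [hA3, hB3, add_zero]
    · rw [hA4, hB4, add_zero]
    · rw [mul_add, ← hA5, ← hB5]; abel
    · rw [mul_add, ← hA6, ← hB6]; abel
  neg_mem' := by
    rintro A ⟨hA1, hA2, hA3, hA4, hA5, hA6⟩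
    refine ⟨?_, ?_, ?_, ?_, ?_, ?_⟩ <;> simp only [Matrix.neg_apply]
    · rw [hA1, neg_zero]
    · rw [hA2, neg_zero]
    · rw [hA3, neg_zero]
    · rw [hA4, neg_zero]
    · rw [mul_neg, ← hA5]; abel
    · rw [mul_neg, ← hA6]; abel
  mul_mem' := by
    rintro A B ⟨hB1, hB2, hB3, hB4, hB5, hB6⟩ ⟨hC1, hC2, hC3, hC4, hC5, hC6⟩
    refine ⟨?_, ?_, ?_, ?_, ?_, ?_⟩ <;> rw [Matrix.mul_apply, Fin.sum_univ_three]
    · rw [hB1, hC1, hB2, hC4, mul_zero, zero_mul, zero_mul]; simp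
    · rw [hB1, hB2, hC2]; simp
    · rw [hB3, hB4, hC3]; simp
    · rw [hB3, hB4, hC4]; simp
    · rw [Matrix.mul_apply, Fin.sum_univ_three, hB1, hB2, hC1, hC4, hC3]
      have key : A 0 0 * B 0 0 - A 1 1 * B 1 1 =
          (A 0 0 - A 1 1) * B 0 0 + A 1 1 * (B 0 0 - B 1 1) := by noncomm_ring
      have h1 : A 1 1 * (s * B 1 0) = s * (A 1 1 * B 1 0) := by
        rw [← mul_assoc, ← hs.comm, mul_assoc]
      simp only [zero_mul, mul_zero, add_zero, zero_add]
      rw [key, hB5, hC5, h1, mul_assoc, ← mul_add,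
        Matrix.mul_apply, Fin.sum_univ_three, hC3, mul_zero, add_zero]
    · rw [Matrix.mul_apply, Fin.sum_univ_three, hC1, hC4, hB3, hB4, hC2]
      have key : A 1 1 * B 1 1 - A 2 2 * B 2 2 =
          A 1 1 * (B 1 1 - B 2 2) + (A 1 1 - A 2 2) * B 2 2 := by noncomm_ring
      have h1 : A 1 1 * (t * B 1 2) = t * (A 1 1 * B 1 2) := by
        rw [← mul_assoc, ← ht.comm, mul_assoc]
      simp only [zero_mul, mul_zero, add_zero, zero_add]
      rw [key, hB6, hC6, h1, mul_assoc, ← mul_add,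
        Matrix.mul_apply, Fin.sum_univ_three, hC2, mul_zero, zero_add]

/-! The support `{(0,0), (1,0), (1,1), (1,2), (2,2)}` of the matrices in `H_{(s,t)}(R)` is an
"H" lying on its side; it is closed under multiplication, the diagonal part is multiplicative, and
a matrix of this shape with zero diagonal squares to zero. Hence the matrix is nilpotent exactly when
its diagonal entries are. -/

namespace Matrix

variable {R : Type*} [Semiring R]

theorem hShaped_mul (a c d e f a' c' d' e' f' : R) :
    !![a, 0, 0; c, d, e; 0, 0, f] * !![a', 0, 0; c', d', e'; 0, 0, f'] =
      !![a * a', 0, 0; c * a' + d * c', d * d', d * e' + e * f'; 0, 0, f * f'] := by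
  simp

theorem exists_hShaped_pow_eq (a c d e f : R) (n : ℕ) :
    ∃ c' e' : R, !![a, 0, 0; c, d, e; 0, 0, f] ^ n =
      !![a ^ n, 0, 0; c', d ^ n, e'; 0, 0, f ^ n] := by
  induction n with
  | zero => exact ⟨0, 0, by simp [one_fin_three]⟩
  | succ n ih =>
    obtain ⟨c', e', h⟩ := ih
    exact ⟨_, _, by rw [pow_succ, h, hShaped_mul, ← pow_succ, ← pow_succ, ← pow_succ]⟩

theorem hShaped_zero_diag_sq (c e : R) : !![0, 0, 0; c, 0, e; 0, 0, 0] ^ 2 = 0 := by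
  rw [sq, hShaped_mul]
  simp [← Matrix.ext_iff, Fin.forall_fin_succ]

theorem isNilpotent_hShaped_iff (a c d e f : R) :
    IsNilpotent !![a, 0, 0; c, d, e; 0, 0, f] ↔
      IsNilpotent a ∧ IsNilpotent d ∧ IsNilpotent f := by
  constructor
  · rintro ⟨n, hn⟩
    obtain ⟨c', e', h⟩ := exists_hShaped_pow_eq a c d e f n
    rw [h] at hn
    exact ⟨⟨n, by simpa using congrFun (congrFun hn 0) 0⟩,
      ⟨n, by simpa using congrFun (congrFun hn 1) 1⟩, ⟨n, by simpa using congrFun (congrFun hn 2) 2⟩⟩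
  · rintro ⟨⟨p, hp⟩, ⟨q, hq⟩, ⟨r, hr⟩⟩
    obtain ⟨c', e', h⟩ := exists_hShaped_pow_eq a c d e f (p + q + r)
    rw [pow_eq_zero_of_le (by omega) hp, pow_eq_zero_of_le (by omega) hq,
      pow_eq_zero_of_le (by omega) hr] at h
    exact IsNilpotent.of_pow ⟨2, h ▸ hShaped_zero_diag_sq c' e'⟩

end Matrix

/-- An element `[[a,0,0],[c,d,e],[0,0,f]]` of `H_{(s,t)}(R)` (so with
`a - d = s*c` and `d - f = t*e`) is nilpotent iff `a`, `d` and `f` are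
nilpotent in `R`. -/
theorem Hst_isNilpotent_iff {R : Type*} [Ring R] (s t : R)
    (hs : s ∈ Set.center R) (ht : t ∈ Set.center R) (a c d e f : R)
    (had : a - d = s * c) (hdf : d - f = t * e) :
    IsNilpotent (⟨!![a, 0, 0; c, d, e; 0, 0, f],
        ⟨by simp, by simp, by simp, by simp, by simpa using had, by simpa using hdf⟩⟩ :
          Hst s t hs ht) ↔
      IsNilpotent a ∧ IsNilpotent d ∧ IsNilpotent f := by
  rw [← Matrix.isNilpotent_hShaped_iff a c d e f]
  exact (IsNilpotent.map_iff (f := (Hst s t hs ht).subtype) Subtype.val_injective).symm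
end

section
/- Let R be a ring and s, t central invertible elements of R. Then R is a CN ring if and only if H_{(s,t)}(R) is a CN ring (with respect to the center of H_{(s,t)}(R) and the nilpotent elements of H_{(s,t)}(R)). -/
/-!
When `s` and `t` are units, the off-diagonal entries `c = s⁻¹ (a - d)` and `e = t⁻¹ (d - f)` of an
element of `H_{(s,t)}(R)` are determined by its diagonal, and the diagonal of a product is the
entrywise product of the diagonals. So `A ↦ (a, d, f)` is a ring isomorphism `H_{(s,t)}(R) ≃ R³`,
and being a CN ring passes to finite products and to homomorphic images.
-/

namespace IsCNRing

theorem of_surjective_s18 {R S : Type*} [Ring R] [Ring S] (h : IsCNRing R) (f : R →+* S)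
    (hf : Function.Surjective f) : IsCNRing S := by
  intro y
  obtain ⟨x, rfl⟩ := hf y
  obtain ⟨c, n, hc, hn, rfl⟩ := h x
  refine ⟨f c, f n, ?_, hn.map f, map_add f c n⟩
  rw [Semigroup.mem_center_iff]
  intro z
  obtain ⟨z, rfl⟩ := hf z
  rw [← map_mul, ← map_mul, Semigroup.mem_center_iff.mp hc z]

theorem pi {ι : Type*} [Finite ι] {R : ι → Type*} [∀ i, Ring (R i)]
    (h : ∀ i, IsCNRing (R i)) : IsCNRing (∀ i, R i) := by
  cases nonempty_fintype ι
  intro x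
  choose c n hc hn hx using fun i => h i (x i)
  choose k hk using hn
  refine ⟨c, n, ?_, ⟨∑ i, k i, ?_⟩, funext hx⟩
  · rw [Set.center_pi]
    exact fun i _ => hc i
  · funext i
    exact pow_eq_zero_of_le (Finset.single_le_sum (fun j _ => Nat.zero_le (k j))
      (Finset.mem_univ i)) (hk i)

end IsCNRing

namespace Hst

variable {R : Type*} [Ring R] {s t : R} {hs : s ∈ Set.center R} {ht : t ∈ Set.center R}

theorem diag_mul (A B : Hst s t hs ht) :
    ((A * B : Hst s t hs ht) : Matrix (Fin 3) (Fin 3) R).diag =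
      (A : Matrix (Fin 3) (Fin 3) R).diag * (B : Matrix (Fin 3) (Fin 3) R).diag := by
  obtain ⟨hA01, hA02, hA20, hA21, -, -⟩ := A.2
  obtain ⟨hB01, hB02, hB20, hB21, -, -⟩ := B.2
  funext i
  fin_cases i <;>
    simp [Matrix.mul_apply, Fin.sum_univ_three, hA01, hA02, hA20, hA21, hB01, hB02, hB20, hB21]

variable (s t hs ht) in
def diagHom : Hst s t hs ht →+* (Fin 3 → R) where
  toFun A := (A : Matrix (Fin 3) (Fin 3) R).diag
  map_one' := by simp
  map_mul' := diag_mul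
  map_zero' := rfl
  map_add' _ _ := rfl

theorem diagHom_injective (hsu : IsUnit s) (htu : IsUnit t) :
    Function.Injective (diagHom s t hs ht) := by
  refine (injective_iff_map_eq_zero _).mpr fun A hA => ?_
  obtain ⟨h01, h02, h20, h21, h10, h12⟩ := A.2
  have h00 : (A : Matrix (Fin 3) (Fin 3) R) 0 0 = 0 := congrFun hA 0
  have h11 : (A : Matrix (Fin 3) (Fin 3) R) 1 1 = 0 := congrFun hA 1
  have h22 : (A : Matrix (Fin 3) (Fin 3) R) 2 2 = 0 := congrFun hA 2
  rw [h00, h11, sub_zero, eq_comm, hsu.mul_right_eq_zero] at h10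
  rw [h11, h22, sub_zero, eq_comm, htu.mul_right_eq_zero] at h12
  ext i j
  fin_cases i <;> fin_cases j <;> simp [*]

theorem diagHom_surjective (hsu : IsUnit s) (htu : IsUnit t) :
    Function.Surjective (diagHom s t hs ht) := by
  intro v
  refine ⟨⟨!![v 0, 0, 0; Ring.inverse s * (v 0 - v 1), v 1, Ring.inverse t * (v 1 - v 2);
    0, 0, v 2], rfl, rfl, rfl, rfl, ?_, ?_⟩, ?_⟩
  · simp [← mul_assoc, Ring.mul_inverse_cancel s hsu]
  · simp [← mul_assoc, Ring.mul_inverse_cancel t htu]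
  · funext i
    fin_cases i <;> rfl

noncomputable def diagEquiv (hsu : IsUnit s) (htu : IsUnit t) : Hst s t hs ht ≃+* (Fin 3 → R) :=
  RingEquiv.ofBijective (diagHom s t hs ht) ⟨diagHom_injective hsu htu, diagHom_surjective hsu htu⟩

end Hst

/-- For central units `s, t` of `R`, the ring `R` is a CN ring iff
`H_{(s,t)}(R)` is a CN ring. -/
theorem isCNRing_iff_Hst {R : Type*} [Ring R] (s t : R)
    (hs : s ∈ Set.center R) (ht : t ∈ Set.center R)
    (hsu : IsUnit s) (htu : IsUnit t) :
    IsCNRing R ↔ IsCNRing (Hst s t hs ht) := by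
  let e : Hst s t hs ht ≃+* (Fin 3 → R) := Hst.diagEquiv hsu htu
  constructor
  · intro h
    exact (IsCNRing.pi fun _ => h).of_surjective_s18 e.symm.toRingHom e.symm.surjective
  · intro h
    exact (h.of_surjective_s18 e.toRingHom e.surjective).of_surjective_s18 (Pi.evalRingHom _ 0)
      (Function.surjective_eval 0)
end

section
/- Every uniquely nil clean ring is a CN ring: if R is a ring such that for every element a of R there is a unique idempotent e of R with a - e nilpotent, then every element of R is a sum of a central element and a nilpotent element. In particular, in such a ring every idempotent is central. -/
/-- A ring is *uniquely nil clean* if every element is, in a unique way, the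
sum of an idempotent and a nilpotent element. -/
def IsUniquelyNilClean (R : Type*) [Ring R] : Prop :=
  ∀ a : R, ∃! e : R, IsIdempotentElem e ∧ IsNilpotent (a - e)

/-! For an idempotent `e` and any `x`, the element `n = e x (1 - e)` squares to zero and
`e + n` is again idempotent. Since `e + n` differs from `e` by the nilpotent `n`, uniqueness of
nil clean decompositions of `e` forces `n = 0`; applied to `e` and `1 - e` this gives
`e x = e x e = x e`. Hence idempotents are central, and the nil clean decomposition `a = e + (a - e)`
is a CN-decomposition. -/

namespace IsIdempotentElem

variable {R : Type*} [Ring R] {e : R}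

lemma mul_mul_one_sub_mul_self (he : IsIdempotentElem e) (x : R) :
    e * x * (1 - e) * (e * x * (1 - e)) = 0 := by
  rw [show e * x * (1 - e) * (e * x * (1 - e)) = e * x * ((1 - e) * e) * x * (1 - e) by
    noncomm_ring, he.one_sub_mul_self, mul_zero, zero_mul, zero_mul]

lemma isNilpotent_mul_mul_one_sub (he : IsIdempotentElem e) (x : R) :
    IsNilpotent (e * x * (1 - e)) :=
  ⟨2, by rw [pow_two, he.mul_mul_one_sub_mul_self]⟩

lemma add_mul_mul_one_sub (he : IsIdempotentElem e) (x : R) :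
    IsIdempotentElem (e + e * x * (1 - e)) := by
  have expand : (e + e * x * (1 - e)) * (e + e * x * (1 - e)) =
      e * e + (e * e) * x * (1 - e) + e * x * ((1 - e) * e) +
        e * x * (1 - e) * (e * x * (1 - e)) := by
    noncomm_ring
  rw [IsIdempotentElem, expand, he.mul_mul_one_sub_mul_self, he.one_sub_mul_self, he.eq]
  noncomm_ring

end IsIdempotentElem

lemma mem_center_of_mul_mul_one_sub_eq_zero {R : Type*} [Ring R] {e : R}
    (hl : ∀ x, e * x * (1 - e) = 0) (hr : ∀ x, (1 - e) * x * e = 0) : e ∈ Set.center R := by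
  refine Semigroup.mem_center_iff.mpr fun x => ?_
  have left : e * x = e * x * e := by
    simpa only [mul_sub, mul_one, sub_eq_zero] using hl x
  have right : x * e = e * x * e := by
    simpa only [sub_mul, one_mul, sub_eq_zero, mul_assoc] using hr x
  rw [left, right]

namespace IsUniquelyNilClean

variable {R : Type*} [Ring R]

lemma eq_of_isNilpotent_sub (h : IsUniquelyNilClean R) {e f : R} (he : IsIdempotentElem e)
    (hf : IsIdempotentElem f) (hef : IsNilpotent (e - f)) : e = f :=
  (h e).unique ⟨he, by simp⟩ ⟨hf, hef⟩

lemma mul_mul_one_sub_eq_zero (h : IsUniquelyNilClean R) {e : R} (he : IsIdempotentElem e)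
    (x : R) : e * x * (1 - e) = 0 := by
  have hnil : IsNilpotent (e - (e + e * x * (1 - e))) := by
    rw [sub_add_cancel_left]
    exact (he.isNilpotent_mul_mul_one_sub x).neg
  simpa using h.eq_of_isNilpotent_sub he (he.add_mul_mul_one_sub x) hnil

lemma mem_center_of_isIdempotentElem (h : IsUniquelyNilClean R) {e : R}
    (he : IsIdempotentElem e) : e ∈ Set.center R :=
  mem_center_of_mul_mul_one_sub_eq_zero (h.mul_mul_one_sub_eq_zero he) fun x => by
    simpa using h.mul_mul_one_sub_eq_zero he.one_sub x

lemma isCNRing (h : IsUniquelyNilClean R) : IsCNRing R := fun a => by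
  obtain ⟨e, ⟨he, hae⟩, -⟩ := h a
  exact ⟨e, a - e, h.mem_center_of_isIdempotentElem he, hae, (add_sub_cancel e a).symm⟩

end IsUniquelyNilClean

/-- Every uniquely nil clean ring is a CN ring; in particular every idempotent
in such a ring is central. -/
theorem isCNRing_of_uniquelyNilClean {R : Type*} [Ring R] (h : IsUniquelyNilClean R) :
    IsCNRing R ∧ ∀ e : R, IsIdempotentElem e → e ∈ Set.center R :=
  ⟨h.isCNRing, fun _ => h.mem_center_of_isIdempotentElem⟩
end
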